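/- arXiv:2304.08420 — 3 statements merged into one kernel-verified Lean document; each statement's English description precedes it below -/
import Mathlib

section
/- Define Φ : ℝ³ → ℝ by Φ(p,q₁,q₂) = 1 − (1−p)³(1−q₂)(1 − p·q₁ − (1−p)·q₂)² − (1−p)³·q₂·(p·q₁ + (1−p)·q₂)² − p³(1−q₂)(1 − (1−p)·q₁ − p·q₂)² − p³·q₂·((1−p)·q₁ + p·q₂)². Then for all p, q₁, q₂ ∈ [0,1] one has Φ(p,q₁,q₂) ≤ 19/20, and Φ(1/2, 0, 4/5) = 19/20. -/
lemma aux1 (s q : ℝ) (hs0 : 0 ≤ s) (hs4 : s ≤ 1/4) (h0 : 0 ≤ q) (h1 : q ≤ 1)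
    (hc : 1 - 2*s ≤ q*(2-5*s)) :
    1/20 ≤ (1-3*s)*q*(1-q) + s*(1-4*s)*(2*q-1)^2 + (q*(2-5*s)-(1-2*s))^2 := by
  nlinarith [sq_nonneg (s-1/4), sq_nonneg (q-4/5), mul_nonneg hs0 h0, sq_nonneg (q*(2-5*s)-(1-2*s)), mul_nonneg (sub_nonneg.2 hs4) h0, mul_nonneg (sub_nonneg.2 hs4) (sub_nonneg.2 h1), mul_nonneg hs0 (sub_nonneg.2 h1), sq_nonneg ((s-1/4)*(q-4/5)), mul_nonneg (mul_nonneg hs0 h0) (sub_nonneg.2 h1)]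

lemma aux2 (s q : ℝ) (hs0 : 0 ≤ s) (hs4 : s ≤ 1/4) (h0 : 0 ≤ q) (h1 : q ≤ 1)
    (hc : q*(2-5*s) ≤ 1 - 3*s) :
    1/20 ≤ (1-3*s)*q*(1-q) + s*(1-4*s)*(2*q-1)^2 + (q*(2-5*s)-(1-3*s))^2 := by
  nlinarith [sq_nonneg (s-1/4), sq_nonneg (q-1/5), mul_nonneg hs0 h0, mul_nonneg (sub_nonneg.2 hs4) h0, mul_nonneg (sub_nonneg.2 hs4) (sub_nonneg.2 h1), mul_nonneg hs0 (sub_nonneg.2 h1), sq_nonneg ((s-1/4)*(q-1/5)), mul_nonneg (mul_nonneg hs0 h0) (sub_nonneg.2 h1)]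

lemma aux3 (s q : ℝ) (hs0 : 0 ≤ s) (hs4 : s ≤ 1/4) (h0 : 0 ≤ q) (h1 : q ≤ 1)
    (hc1 : 1 - 3*s ≤ q*(2-5*s)) (hc2 : q*(2-5*s) ≤ 1 - 2*s) :
    1/20 ≤ (1-3*s)*q*(1-q) + s*(1-4*s)*(2*q-1)^2 := by
  nlinarith [sq_nonneg (s-1/4), sq_nonneg (q-1/2), mul_nonneg hs0 h0, mul_nonneg (sub_nonneg.2 hs4) h0, mul_nonneg (sub_nonneg.2 hs4) (sub_nonneg.2 h1), mul_nonneg hs0 (sub_nonneg.2 h1), mul_nonneg (sub_nonneg.2 hc1) (sub_nonneg.2 hc2), sq_nonneg (q*(2-5*s)-(1-2*s)), sq_nonneg (q*(2-5*s)-(1-3*s))]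

lemma key (p q₁ q₂ : ℝ) (hp0 : 0 ≤ p) (hp1 : p ≤ 1) (h10 : 0 ≤ q₁) (h11 : q₁ ≤ 1)
    (h20 : 0 ≤ q₂) (h21 : q₂ ≤ 1) :
    1/20 ≤ (1 - p)^3 * (1 - q₂) * (1 - p * q₁ - (1 - p) * q₂)^2
    + (1 - p)^3 * q₂ * (p * q₁ + (1 - p) * q₂)^2
    + p^3 * (1 - q₂) * (1 - (1 - p) * q₁ - p * q₂)^2
    + p^3 * q₂ * ((1 - p) * q₁ + p * q₂)^2 := by
  obtain ⟨s, hs_def⟩ : ∃ s : ℝ, s = p * (1 - p) := ⟨_, rfl⟩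
  have hs0 : 0 ≤ s := hs_def ▸ mul_nonneg hp0 (by linarith)
  have hs4 : s ≤ 1/4 := by rw [hs_def]; nlinarith [sq_nonneg (2*p-1)]
  obtain ⟨t, ht_def⟩ : ∃ t : ℝ, t = s * q₁ + q₂ * (2 - 5*s) - (1 - 2*s) := ⟨_, rfl⟩
  have hid : (1 - p)^3 * (1 - q₂) * (1 - p * q₁ - (1 - p) * q₂)^2
    + (1 - p)^3 * q₂ * (p * q₁ + (1 - p) * q₂)^2
    + p^3 * (1 - q₂) * (1 - (1 - p) * q₁ - p * q₂)^2
    + p^3 * q₂ * ((1 - p) * q₁ + p * q₂)^2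
      = (1-3*s)*q₂*(1-q₂) + s*(1-4*s)*(2*q₂-1)^2 + t^2 := by
    rw [ht_def, hs_def]; ring
  rw [hid]
  have htlo : q₂ * (2 - 5*s) - (1 - 2*s) ≤ t := by
    have := mul_nonneg hs0 h10; rw [ht_def]; linarith
  have hthi : t ≤ q₂ * (2 - 5*s) - (1 - 3*s) := by
    have : s * q₁ ≤ s := by nlinarith
    rw [ht_def]; linarith
  rcases le_total (q₂ * (2 - 5*s)) (1 - 2*s) with h | h
  · rcases le_total (q₂ * (2 - 5*s)) (1 - 3*s) with h2 | h2
    · have h2' := aux2 s q₂ hs0 hs4 h20 h21 h2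
      have : (q₂*(2-5*s)-(1-3*s))^2 ≤ t^2 := by
        have h' := pow_le_pow_left₀ (show (0:ℝ) ≤ -(q₂*(2-5*s)-(1-3*s)) by linarith)
          (show -(q₂*(2-5*s)-(1-3*s)) ≤ -t by linarith) 2
        have e : (1 - 3*s - q₂*(2-5*s))^2 = (q₂*(2-5*s)-(1-3*s))^2 := by ring
        simpa [neg_sq, e] using h'
      linarith
    · have h3 := aux3 s q₂ hs0 hs4 h20 h21 h2 h
      linarith [sq_nonneg t]
  · have h1' := aux1 s q₂ hs0 hs4 h20 h21 h
    have : (q₂*(2-5*s)-(1-2*s))^2 ≤ t^2 :=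
      pow_le_pow_left₀ (by linarith) htlo 2
    linarith

/-- The probability that a fixed vertex of a 2-regular graph with girth at least 7 is
satisfied after one round of the local algorithm, as an explicit polynomial in
`(p, q₁, q₂)`. -/
noncomputable def Phi (p q₁ q₂ : ℝ) : ℝ :=
  1 - (1 - p)^3 * (1 - q₂) * (1 - p * q₁ - (1 - p) * q₂)^2
    - (1 - p)^3 * q₂ * (p * q₁ + (1 - p) * q₂)^2
    - p^3 * (1 - q₂) * (1 - (1 - p) * q₁ - p * q₂)^2
    - p^3 * q₂ * ((1 - p) * q₁ + p * q₂)^2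

/-- `Φ ≤ 19/20` on `[0,1]³`, with equality at `(1/2, 0, 4/5)`. -/
theorem Phi_max :
    (∀ p ∈ Set.Icc (0 : ℝ) 1, ∀ q₁ ∈ Set.Icc (0 : ℝ) 1, ∀ q₂ ∈ Set.Icc (0 : ℝ) 1,
        Phi p q₁ q₂ ≤ 19/20) ∧
      Phi (1/2) 0 (4/5) = 19/20 := by
  constructor
  · rintro p ⟨hp0, hp1⟩ q₁ ⟨h10, h11⟩ q₂ ⟨h20, h21⟩
    have h := key p q₁ q₂ hp0 hp1 h10 h11 h20 h21
    unfold Phi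
    linarith
  · unfold Phi
    norm_num
end

section
/- With H_C = Σ_{S ⊆ [n]} W(S)·Z_S for real weights W and |γ,β⟩ = exp(−iβH_M)·exp(−iγH_C)·|s⟩, for every K ⊆ [n] the expectation satisfies ⟨γ,β| Z_K |γ,β⟩ = Σ_{L ⊆ K} i^{|L|} · sin(2β)^{|L|} · cos(2β)^{|K|−|L|} · Σ_{𝓕 ∈ 𝓞_K(L)} α_𝓕, where α_𝓕 = ∏_{M ∈ 𝓕} i·sin(−2γ·W(M)) · ∏_{N ∈ 𝓞(L)∖𝓕} cos(2γ·W(N)). -/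
/-!
Conjugating `Z_K` by the mixer `U = exp(-iβ H_M)`: the `X_j` with `j ∉ K` commute with `Z_K`
and cancel, those with `j ∈ K` anticommute with it, so `U† Z_K U = exp(2iβ ∑_{j ∈ K} X_j) Z_K`,
and since `X_j² = 1` this is `∑_{L ⊆ K} (i sin 2β)^{|L|} (cos 2β)^{|K|-|L|} X_L Z_K`.

The cost layer is diagonal with phases `e^{-iγ C(x)}`, so in the state it prepares
`⟨X_L Z_K⟩ = 2^{-n} ∑_x e^{iγ (C(x ⊕ L) - C(x))} χ_K(x)`. Flipping the bits in `L` changes the term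
`W(M) χ_M` of `C` only for `M ∈ 𝓞(L)`, by `-2 W(M) χ_M(x)`, and as `χ_M = ±1` the phase factors as
`∏_{M ∈ 𝓞(L)} (cos 2γW(M) + i sin(-2γW(M)) χ_M(x))`. Expanding this product over the subfamilies
`𝓕 ⊆ 𝓞(L)` gives `∑_𝓕 α_𝓕 χ_{△𝓕}(x)`, and orthogonality of characters, `∑_x χ_A χ_B = 2^n [A = B]`,
keeps exactly the families with `△𝓕 = K`.
-/

open Finset Matrix
open scoped Classical symmDiff

namespace QAOAGeneral

variable {n : ℕ}

/-- The Pauli-`Z` operator on the set `S` of qubits: diagonal with entry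
`∏_{j ∈ S} (-1)^{x j}` at the basis element `x : Fin n → Bool`. -/
noncomputable def Zop (S : Finset (Fin n)) : Matrix (Fin n → Bool) (Fin n → Bool) ℂ :=
  Matrix.diagonal fun x => ∏ j ∈ S, if x j then (-1 : ℂ) else 1

/-- The Pauli-`X` operator on qubit `j`: the permutation matrix flipping bit `j`. -/
noncomputable def Xop (j : Fin n) : Matrix (Fin n → Bool) (Fin n → Bool) ℂ :=
  Matrix.of fun x y => if y = Function.update x j (!x j) then 1 else 0

/-- The mixing Hamiltonian `H_M = ∑_j X_j`. -/
noncomputable def HM : Matrix (Fin n → Bool) (Fin n → Bool) ℂ := ∑ j : Fin n, Xop j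

/-- The uniform superposition `|s⟩ = 2^{-n/2} ∑_x e_x`. -/
noncomputable def sVec : (Fin n → Bool) → ℂ := fun _ => ((Real.sqrt 2 : ℝ) : ℂ)⁻¹ ^ n

/-- The problem Hamiltonian `H_C = ∑_{S ⊆ [n]} W(S) · Z_S`. -/
noncomputable def HC (W : Finset (Fin n) → ℝ) : Matrix (Fin n → Bool) (Fin n → Bool) ℂ :=
  ∑ S : Finset (Fin n), (W S : ℂ) • Zop S

/-- The QAOA state `|γ,β⟩ = exp(-iβ H_M) · exp(-iγ H_C) · |s⟩`. -/
noncomputable def qaoaState (W : Finset (Fin n) → ℝ) (γ β : ℝ) : (Fin n → Bool) → ℂ :=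
  (NormedSpace.exp ((-Complex.I * (β : ℂ)) • (HM : Matrix (Fin n → Bool) (Fin n → Bool) ℂ)) *
    NormedSpace.exp ((-Complex.I * (γ : ℂ)) • HC W)).mulVec sVec

/-- The expectation `⟨ψ| A |ψ⟩`. -/
noncomputable def expectation (A : Matrix (Fin n → Bool) (Fin n → Bool) ℂ)
    (ψ : (Fin n → Bool) → ℂ) : ℂ :=
  star ψ ⬝ᵥ A.mulVec ψ

/-- `𝓞(L)`: the sets `M` with nonzero weight whose intersection with `L` is odd. -/
noncomputable def oddInter (W : Finset (Fin n) → ℝ) (L : Finset (Fin n)) :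
    Finset (Finset (Fin n)) :=
  Finset.univ.filter fun M => W M ≠ 0 ∧ Odd (M ∩ L).card

instance : Std.Commutative (α := Finset (Fin n)) (· ∆ ·) := ⟨symmDiff_comm⟩
instance : Std.Associative (α := Finset (Fin n)) (· ∆ ·) := ⟨symmDiff_assoc⟩

/-- Iterated symmetric difference `△𝓕` over the members of a family `𝓕`. -/
def symmDiffAll (F : Finset (Finset (Fin n))) : Finset (Fin n) :=
  F.fold (· ∆ ·) ∅ id

/-- `𝓞_K(L)`: the families `𝓕 ⊆ 𝓞(L)` with `△𝓕 = K`. -/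
noncomputable def oddInterTo (W : Finset (Fin n) → ℝ) (K L : Finset (Fin n)) :
    Finset (Finset (Finset (Fin n))) :=
  (oddInter W L).powerset.filter fun F => symmDiffAll F = K

/-- `α_𝓕 = ∏_{M ∈ 𝓕} i·sin(-2γ·W(M)) · ∏_{N ∈ 𝓞(L)∖𝓕} cos(2γ·W(N))`. -/
noncomputable def alpha (W : Finset (Fin n) → ℝ) (γ : ℝ) (L : Finset (Fin n))
    (F : Finset (Finset (Fin n))) : ℂ :=
  (∏ M ∈ F, Complex.I * (Real.sin (-2 * γ * W M) : ℂ)) *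
    ∏ N ∈ oddInter W L \ F, ((Real.cos (2 * γ * W N) : ℝ) : ℂ)

section InvolutionExp

variable {𝔸 : Type*} [Ring 𝔸] [Algebra ℂ 𝔸] [TopologicalSpace 𝔸] [IsTopologicalRing 𝔸]
  [T2Space 𝔸] [ContinuousSMul ℂ 𝔸]

theorem exp_ofReal_mul_I_smul_of_mul_self_eq_one (θ : ℝ) {A : 𝔸} (hA : A * A = 1) :
    NormedSpace.exp (((θ : ℂ) * Complex.I) • A) =
      ((Real.cos θ : ℝ) : ℂ) • (1 : 𝔸) + (Complex.I * ((Real.sin θ : ℝ) : ℂ)) • A := by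
  have hA_even (k : ℕ) : A ^ (2 * k) = 1 := by rw [pow_mul, sq, hA, one_pow]
  have hA_odd (k : ℕ) : A ^ (2 * k + 1) = A := by rw [pow_succ, hA_even, one_mul]
  rw [NormedSpace.exp_eq_tsum ℂ]
  refine (HasSum.even_add_odd ?_ ?_).tsum_eq
  · convert (Complex.hasSum_cos (θ : ℂ)).smul_const (1 : 𝔸) using 1
    · funext k
      rw [smul_pow, hA_even, smul_smul, mul_pow, pow_mul Complex.I, Complex.I_sq]
      congr 1
      field_simp
    · rw [Complex.ofReal_cos]
  · convert ((Complex.hasSum_sin (θ : ℂ)).mul_left Complex.I).smul_const A using 1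
    · funext k
      rw [smul_pow, hA_odd, smul_smul, mul_pow, pow_succ Complex.I, pow_mul Complex.I,
        Complex.I_sq]
      congr 1
      field_simp
    · rw [Complex.ofReal_sin]

end InvolutionExp

theorem prod_symmDiff_of_mul_self_eq_one {ι M : Type*} [CommMonoid M] [DecidableEq ι]
    {f : ι → M} (hf : ∀ i, f i * f i = 1) (s t : Finset ι) :
    ∏ i ∈ s ∆ t, f i = (∏ i ∈ s, f i) * ∏ i ∈ t, f i := by
  rw [← prod_union_inter, symmDiff_eq_sup_sdiff_inf, sup_eq_union, inf_eq_inter,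
    ← prod_sdiff inter_subset_union, mul_assoc, ← prod_mul_distrib,
    prod_eq_one fun i _ => hf i, mul_one]

noncomputable def chi (S : Finset (Fin n)) (x : Fin n → Bool) : ℂ :=
  ∏ j ∈ S, if x j then (-1 : ℂ) else 1

theorem Zop_eq_diagonal_chi (S : Finset (Fin n)) : Zop S = diagonal (chi S) := rfl

theorem chi_symmDiff (A B : Finset (Fin n)) (x : Fin n → Bool) :
    chi (A ∆ B) x = chi A x * chi B x :=
  prod_symmDiff_of_mul_self_eq_one (fun j => by cases x j <;> norm_num) A B

theorem chi_mul_self (S : Finset (Fin n)) (x : Fin n → Bool) : chi S x * chi S x = 1 := by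
  rw [← chi_symmDiff, symmDiff_self, bot_eq_empty, chi, prod_empty]

theorem conj_chi (S : Finset (Fin n)) (x : Fin n → Bool) :
    starRingEnd ℂ (chi S x) = chi S x := by
  simp [chi, apply_ite]

theorem symmDiffAll_insert {F : Finset (Finset (Fin n))} {M : Finset (Fin n)} (hM : M ∉ F) :
    symmDiffAll (insert M F) = M ∆ symmDiffAll F :=
  fold_insert hM

theorem chi_symmDiffAll (F : Finset (Finset (Fin n))) (x : Fin n → Bool) :
    ∏ M ∈ F, chi M x = chi (symmDiffAll F) x := by
  induction F using Finset.induction_on with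
  | empty => simp [symmDiffAll, chi]
  | insert M F hM ih => rw [prod_insert hM, ih, symmDiffAll_insert hM, chi_symmDiff]

def flipS (L : Finset (Fin n)) (x : Fin n → Bool) : Fin n → Bool :=
  fun j => if j ∈ L then !x j else x j

theorem flipS_flipS (A B : Finset (Fin n)) (x : Fin n → Bool) :
    flipS A (flipS B x) = flipS (A ∆ B) x := by
  funext j
  by_cases hA : j ∈ A <;> by_cases hB : j ∈ B <;> simp [flipS, mem_symmDiff, hA, hB]

theorem flipS_empty : flipS (∅ : Finset (Fin n)) = id := by
  funext x j
  simp [flipS]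

theorem flipS_involutive (L : Finset (Fin n)) : Function.Involutive (flipS L) := fun x => by
  rw [flipS_flipS, symmDiff_self, bot_eq_empty, flipS_empty, id]

theorem chi_flipS (S L : Finset (Fin n)) (x : Fin n → Bool) :
    chi S (flipS L x) = (-1) ^ #(S ∩ L) * chi S x := by
  have hflip (j : Fin n) : (if flipS L x j then (-1 : ℂ) else 1) =
      (if j ∈ L then -1 else 1) * (if x j then -1 else 1) := by
    by_cases hj : j ∈ L <;> cases hx : x j <;> simp [flipS, hj, hx]
  simp only [chi, hflip, prod_mul_distrib, prod_ite_mem, prod_const]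

theorem sum_chi_of_nonempty {T : Finset (Fin n)} (hT : T.Nonempty) :
    ∑ x, chi T x = 0 := by
  obtain ⟨a, ha⟩ := hT
  refine self_eq_neg.mp ?_
  calc ∑ x, chi T x = ∑ x, chi T (flipS {a} x) :=
        (Equiv.sum_comp ((flipS_involutive {a}).toPerm _) (chi T)).symm
    _ = -∑ x, chi T x := by
        simp [chi_flipS, inter_singleton_of_mem ha]

theorem sum_chi_mul_chi (A B : Finset (Fin n)) :
    ∑ x, chi A x * chi B x = if A = B then 2 ^ n else 0 := by
  simp_rw [← chi_symmDiff]
  split_ifs with hAB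
  · simp [hAB, chi]
  · exact sum_chi_of_nonempty (nonempty_iff_ne_empty.mpr (symmDiff_eq_empty.not.mpr hAB))

-- `X_L = ∏_{j ∈ L} X_j`
noncomputable def XL (L : Finset (Fin n)) : Matrix (Fin n → Bool) (Fin n → Bool) ℂ :=
  of fun x y => if y = flipS L x then 1 else 0

theorem XL_mulVec (L : Finset (Fin n)) (v : (Fin n → Bool) → ℂ) (x : Fin n → Bool) :
    (XL L *ᵥ v) x = v (flipS L x) := by
  simp [XL, mulVec, dotProduct]

theorem XL_mul_XL (A B : Finset (Fin n)) : XL A * XL B = XL (A ∆ B) := by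
  ext x y
  rw [mul_apply, sum_eq_single (flipS A x) (fun z _ hz => by simp [XL, hz]) (by simp)]
  simp [XL, flipS_flipS, symmDiff_comm A B]

theorem XL_empty : XL (∅ : Finset (Fin n)) = 1 := by
  ext x y
  simp [XL, flipS_empty, one_apply, eq_comm]

theorem XL_mul_self (L : Finset (Fin n)) : XL L * XL L = 1 := by
  rw [XL_mul_XL, symmDiff_self, bot_eq_empty, XL_empty]

theorem conjTranspose_XL (L : Finset (Fin n)) : (XL L)ᴴ = XL L := by
  ext x y
  simp only [XL, conjTranspose_apply, of_apply, apply_ite star, star_one, star_zero]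
  exact if_congr ((flipS_involutive L).eq_iff.symm.trans eq_comm) rfl rfl

theorem Xop_eq_XL (j : Fin n) : Xop j = XL {j} := by
  have hupdate (x : Fin n → Bool) : Function.update x j (!x j) = flipS {j} x := by
    funext k
    by_cases hk : k = j
    · subst hk; simp [flipS]
    · simp [flipS, hk]
  ext x y
  simp only [Xop, XL, of_apply, hupdate]

theorem Zop_mul_XL (K L : Finset (Fin n)) :
    Zop K * XL L = (-1 : ℂ) ^ #(K ∩ L) • (XL L * Zop K) := by
  ext x y
  by_cases hy : y = flipS L x
  · subst hy
    simp [Zop_eq_diagonal_chi, XL, chi_flipS, ← mul_assoc, ← pow_add, ← two_mul, pow_mul]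
  · simp [Zop_eq_diagonal_chi, XL, hy]

theorem Xop_commute (i j : Fin n) : Commute (Xop i) (Xop j) := by
  rw [Xop_eq_XL, Xop_eq_XL, commute_iff_eq, XL_mul_XL, XL_mul_XL, symmDiff_comm]

theorem conjTranspose_HM : (HM : Matrix (Fin n → Bool) (Fin n → Bool) ℂ)ᴴ = HM := by
  simp only [HM, conjTranspose_sum, Xop_eq_XL, conjTranspose_XL]

theorem Zop_mul_Xop_of_mem {K : Finset (Fin n)} {j : Fin n} (hj : j ∈ K) :
    Zop K * Xop j = -(Xop j * Zop K) := by
  rw [Xop_eq_XL, Zop_mul_XL, inter_singleton_of_mem hj, card_singleton, pow_one, neg_one_smul]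

theorem Zop_commute_Xop_of_notMem {K : Finset (Fin n)} {j : Fin n} (hj : j ∉ K) :
    Commute (Zop K) (Xop j) := by
  rw [commute_iff_eq, Xop_eq_XL, Zop_mul_XL, inter_singleton_of_notMem hj, card_empty, pow_zero,
    one_smul]

theorem exp_smul_sum_Xop (θ : ℝ) (K : Finset (Fin n)) :
    NormedSpace.exp (((θ : ℂ) * Complex.I) • ∑ j ∈ K, Xop j) =
      ∑ L ∈ K.powerset, (Complex.I ^ #L * ((Real.sin θ : ℝ) : ℂ) ^ #L *
        ((Real.cos θ : ℝ) : ℂ) ^ (#K - #L)) • XL L := by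
  induction K using Finset.induction_on with
  | empty => simp [XL_empty]
  | insert a K ha ih =>
    have hcomm : Commute (((θ : ℂ) * Complex.I) • Xop a)
        (((θ : ℂ) * Complex.I) • ∑ j ∈ K, Xop j) :=
      ((Commute.sum_right _ _ _ fun j _ => Xop_commute a j).smul_left _).smul_right _
    have hXa : Xop a * Xop a = 1 := by rw [Xop_eq_XL, XL_mul_self]
    rw [sum_insert ha, smul_add, Matrix.exp_add_of_commute _ _ hcomm, ih,
      exp_ofReal_mul_I_smul_of_mul_self_eq_one θ hXa, sum_powerset_insert ha, add_mul,
      mul_sum, mul_sum]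
    congr 1 <;> refine sum_congr rfl fun L hL => ?_
    · have hcard : #(insert a K) - #L = #K - #L + 1 := by
        have := card_le_card (mem_powerset.mp hL)
        rw [card_insert_of_notMem ha]
        omega
      rw [smul_mul_assoc, one_mul, smul_smul, hcard, pow_succ]
      ring_nf
    · have haL : a ∉ L := fun h => ha (mem_powerset.mp hL h)
      have hins : {a} ∆ L = insert a L := by
        ext j
        by_cases hj : j = a <;> simp [mem_symmDiff, hj, haL]
      rw [smul_mul_assoc, mul_smul_comm, smul_smul, Xop_eq_XL, XL_mul_XL, hins,
        card_insert_of_notMem haL, card_insert_of_notMem ha, Nat.add_sub_add_right, pow_succ,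
        pow_succ]
      ring_nf

theorem conjTranspose_exp_HM_mul_Zop_mul_exp_HM (β : ℝ) (K : Finset (Fin n)) :
    (NormedSpace.exp ((-Complex.I * (β : ℂ)) • HM))ᴴ * Zop K *
        NormedSpace.exp ((-Complex.I * (β : ℂ)) • HM) =
      ∑ L ∈ K.powerset, (Complex.I ^ #L * ((Real.sin (2 * β) : ℝ) : ℂ) ^ #L *
        ((Real.cos (2 * β) : ℝ) : ℂ) ^ (#K - #L)) • (XL L * Zop K) := by
  set c : ℂ := -Complex.I * β with hc
  set A := ∑ j ∈ K, Xop j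
  set B := ∑ j ∈ Kᶜ, Xop j
  have hHM : HM = A + B := (sum_add_sum_compl K Xop).symm
  have hAB : Commute A B :=
    Commute.sum_left _ _ _ fun i _ => Commute.sum_right _ _ _ fun j _ => Xop_commute i j
  have hZA : SemiconjBy (Zop K) A (-A) := by
    simp only [SemiconjBy, A, mul_sum, sum_mul, ← sum_neg_distrib, neg_mul]
    exact sum_congr rfl fun j hj => Zop_mul_Xop_of_mem hj
  have hZB : SemiconjBy (Zop K) B B :=
    Commute.sum_right _ _ _ fun j hj => Zop_commute_Xop_of_notMem (mem_compl.mp hj)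
  have hstar : (NormedSpace.exp (c • HM (n := n)))ᴴ = NormedSpace.exp (-c • HM) := by
    rw [← exp_conjTranspose, conjTranspose_smul, conjTranspose_HM, hc]
    simp
  have hswap :
      Zop K * NormedSpace.exp (c • HM (n := n)) = NormedSpace.exp (c • (-A + B)) * Zop K := by
    rw [hHM]
    -- `exp` does not depend on the norm, so any matrix norm serves for this Banach-algebra lemma
    open scoped Norms.Operator in exact ((hZA.add_right hZB).smul_right c).exp_right
  have hcomm : Commute (-c • (A + B)) (c • (-A + B)) :=
    ((((Commute.refl A).neg_right.add_right hAB).add_left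
      (hAB.symm.neg_right.add_right (Commute.refl B))).smul_left _).smul_right _
  calc (NormedSpace.exp (c • HM))ᴴ * Zop K * NormedSpace.exp (c • HM)
      = NormedSpace.exp (-c • (A + B) + c • (-A + B)) * Zop K := by
        rw [hstar, mul_assoc, hswap, ← mul_assoc, hHM, Matrix.exp_add_of_commute _ _ hcomm]
    _ = NormedSpace.exp ((((2 * β : ℝ) : ℂ) * Complex.I) • A) * Zop K := by
        congr 2
        rw [hc]
        push_cast
        module
    _ = _ := by
        rw [exp_smul_sum_Xop, sum_mul]
        simp_rw [smul_mul_assoc]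

noncomputable def cost (W : Finset (Fin n) → ℝ) (x : Fin n → Bool) : ℂ :=
  ∑ S, (W S : ℂ) * chi S x

theorem HC_eq_diagonal_cost (W : Finset (Fin n) → ℝ) : HC W = diagonal (cost W) := by
  ext x y
  by_cases hxy : x = y
  · subst hxy
    simp [HC, cost, Zop_eq_diagonal_chi, Matrix.sum_apply]
  · simp [HC, Zop_eq_diagonal_chi, Matrix.sum_apply, hxy]

theorem exp_smul_HC (c : ℂ) (W : Finset (Fin n) → ℝ) :
    NormedSpace.exp (c • HC W) = diagonal fun x => Complex.exp (c * cost W x) := by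
  rw [HC_eq_diagonal_cost, ← diagonal_smul, exp_diagonal]
  congr 1
  funext x
  rw [Pi.coe_exp, Pi.smul_apply, smul_eq_mul, Complex.exp_eq_exp_ℂ]

theorem conj_cost (W : Finset (Fin n) → ℝ) (x : Fin n → Bool) :
    starRingEnd ℂ (cost W x) = cost W x := by
  simp [cost, conj_chi]

theorem cost_flipS_sub (W : Finset (Fin n) → ℝ) (L : Finset (Fin n)) (x : Fin n → Bool) :
    cost W (flipS L x) - cost W x = ∑ M ∈ oddInter W L, -2 * (W M : ℂ) * chi M x := by
  rw [oddInter, sum_filter, cost, cost, ← sum_sub_distrib]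
  refine sum_congr rfl fun S _ => ?_
  rw [chi_flipS]
  split_ifs with hS
  · rw [hS.2.neg_one_pow]
    ring
  · by_cases hW : W S = 0
    · simp [hW]
    · rw [(Nat.not_odd_iff_even.mp fun hodd => hS ⟨hW, hodd⟩).neg_one_pow]
      ring

theorem conj_exp_cost_flipS_mul_exp_cost (W : Finset (Fin n) → ℝ) (γ : ℝ) (L : Finset (Fin n))
    (x : Fin n → Bool) :
    starRingEnd ℂ (Complex.exp (-Complex.I * γ * cost W (flipS L x))) *
        Complex.exp (-Complex.I * γ * cost W x) =
      ∏ M ∈ oddInter W L, (Complex.I * ((Real.sin (-2 * γ * W M) : ℝ) : ℂ) * chi M x +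
        ((Real.cos (2 * γ * W M) : ℝ) : ℂ)) := by
  have hphase : starRingEnd ℂ (-Complex.I * γ * cost W (flipS L x)) +
      -Complex.I * γ * cost W x = ∑ M ∈ oddInter W L, (((-2 * γ * W M : ℝ) : ℂ) * Complex.I) •
        chi M x := by
    calc _ = Complex.I * γ * (cost W (flipS L x) - cost W x) := by
          simp only [map_mul, map_neg, Complex.conj_I, Complex.conj_ofReal, conj_cost]
          ring
      _ = _ := by
          rw [cost_flipS_sub, mul_sum]
          refine sum_congr rfl fun M _ => ?_
          push_cast
          ring
  rw [← Complex.exp_conj, ← Complex.exp_add, hphase, Complex.exp_sum]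
  refine prod_congr rfl fun M _ => ?_
  rw [Complex.exp_eq_exp_ℂ,
    exp_ofReal_mul_I_smul_of_mul_self_eq_one (-2 * γ * W M) (chi_mul_self M x),
    show -2 * γ * W M = -(2 * γ * W M) by ring, Real.cos_neg, smul_eq_mul, smul_eq_mul]
  ring

theorem prod_oddInter_eq_sum_alpha (W : Finset (Fin n) → ℝ) (γ : ℝ) (L : Finset (Fin n))
    (x : Fin n → Bool) :
    ∏ M ∈ oddInter W L, (Complex.I * ((Real.sin (-2 * γ * W M) : ℝ) : ℂ) * chi M x +
        ((Real.cos (2 * γ * W M) : ℝ) : ℂ)) =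
      ∑ F ∈ (oddInter W L).powerset, alpha W γ L F * chi (symmDiffAll F) x := by
  rw [prod_add]
  refine sum_congr rfl fun F _ => ?_
  rw [alpha, prod_mul_distrib, chi_symmDiffAll]
  ring

theorem star_sVec_mul_sVec (x y : Fin n → Bool) : star (sVec x) * sVec y = (2⁻¹ : ℂ) ^ n := by
  simp only [sVec]
  rw [star_pow, star_inv₀, Complex.star_def, Complex.conj_ofReal, ← mul_pow, ← mul_inv,
    ← Complex.ofReal_mul, Real.mul_self_sqrt zero_le_two]
  norm_num

theorem expectation_mulVec (A U : Matrix (Fin n → Bool) (Fin n → Bool) ℂ)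
    (ψ : (Fin n → Bool) → ℂ) : expectation A (U *ᵥ ψ) = expectation (Uᴴ * A * U) ψ := by
  simp only [expectation, star_mulVec, ← dotProduct_mulVec, mulVec_mulVec, mul_assoc]

theorem expectation_sum_smul {ι : Type*} (s : Finset ι) (c : ι → ℂ)
    (A : ι → Matrix (Fin n → Bool) (Fin n → Bool) ℂ) (ψ : (Fin n → Bool) → ℂ) :
    expectation (∑ i ∈ s, c i • A i) ψ = ∑ i ∈ s, c i * expectation (A i) ψ := by
  simp only [expectation, sum_mulVec, smul_mulVec, dotProduct_sum, dotProduct_smul, smul_eq_mul]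

theorem expectation_XL_mul_Zop (W : Finset (Fin n) → ℝ) (γ : ℝ) (K L : Finset (Fin n)) :
    expectation (XL L * Zop K) (NormedSpace.exp ((-Complex.I * (γ : ℂ)) • HC W) *ᵥ sVec) =
      ∑ F ∈ oddInterTo W K L, alpha W γ L F := by
  set φ := NormedSpace.exp ((-Complex.I * (γ : ℂ)) • HC W) *ᵥ sVec
  have hφ (x : Fin n → Bool) : φ x = Complex.exp (-Complex.I * γ * cost W x) * sVec x := by
    simp only [φ, exp_smul_HC, mulVec_diagonal]
  calc expectation (XL L * Zop K) φ = ∑ x, star (φ (flipS L x)) * (chi K x * φ x) := by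
        rw [expectation, ← mulVec_mulVec, dotProduct,
          ← Equiv.sum_comp ((flipS_involutive L).toPerm _)]
        simp [XL_mulVec, Zop_eq_diagonal_chi, mulVec_diagonal, flipS_involutive L _]
    _ = ∑ x, (2⁻¹ : ℂ) ^ n *
          (∑ F ∈ (oddInter W L).powerset, alpha W γ L F * chi (symmDiffAll F) x) * chi K x := by
        refine sum_congr rfl fun x _ => ?_
        rw [hφ, hφ, star_mul', ← star_sVec_mul_sVec (flipS L x) x, ← prod_oddInter_eq_sum_alpha,
          ← conj_exp_cost_flipS_mul_exp_cost, Complex.star_def]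
        ring
    _ = ∑ F ∈ (oddInter W L).powerset, if symmDiffAll F = K then alpha W γ L F else 0 := by
        simp_rw [mul_sum, sum_mul]
        rw [sum_comm]
        refine sum_congr rfl fun F _ => ?_
        simp_rw [mul_assoc, ← mul_sum]
        rw [sum_chi_mul_chi]
        split_ifs
        · rw [mul_left_comm, ← mul_pow, inv_mul_cancel₀ two_ne_zero, one_pow, mul_one]
        · simp
    _ = _ := (sum_filter _ _).symm

/-- the expectation of `Z_K` in the QAOA state for a general diagonal
problem Hamiltonian `H_C = ∑_S W(S)·Z_S`. -/
theorem zK_expectation (W : Finset (Fin n) → ℝ) (γ β : ℝ) (K : Finset (Fin n)) :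
    expectation (Zop K) (qaoaState W γ β) =
      ∑ L ∈ K.powerset, Complex.I ^ L.card * ((Real.sin (2 * β) : ℝ) : ℂ) ^ L.card *
        ((Real.cos (2 * β) : ℝ) : ℂ) ^ (K.card - L.card) *
        ∑ F ∈ oddInterTo W K L, alpha W γ L F := by
  rw [qaoaState, ← mulVec_mulVec, expectation_mulVec, conjTranspose_exp_HM_mul_Zop_mul_exp_HM,
    expectation_sum_smul]
  simp_rw [expectation_XL_mul_Zop]

end QAOAGeneral
end

section
/- Define g : [0,1] → ℝ by g(p) = (9 − 30p + 19p² + 42p³ − 55p⁴ − 4p⁵ + 76p⁶ − 64p⁷ + 16p⁸) / (12 − 52p + 88p² − 72p³ + 36p⁴). Then the denominator 12 − 52p + 88p² − 72p³ + 36p⁴ is positive for all p ∈ [0,1], g(p) ≤ 19/20 for all p ∈ [0,1], and g(1/2) = 19/20. -/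
/-- The probability that a fixed vertex of a 2-regular graph with girth at least 7 is
satisfied after one round of the local algorithm with initial probability `p`, `q₁ = 0`
and the optimal choice of `q₂`, as an explicit rational function of `p`. -/
noncomputable def g (p : ℝ) : ℝ :=
  (9 - 30*p + 19*p^2 + 42*p^3 - 55*p^4 - 4*p^5 + 76*p^6 - 64*p^7 + 16*p^8) /
    (12 - 52*p + 88*p^2 - 72*p^3 + 36*p^4)

/-- the denominator of `g` is positive on `[0,1]`, `g ≤ 19/20` on `[0,1]`,
and `g(1/2) = 19/20`. -/
theorem g_max :
    (∀ p ∈ Set.Icc (0 : ℝ) 1, 0 < 12 - 52*p + 88*p^2 - 72*p^3 + 36*p^4) ∧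
      (∀ p ∈ Set.Icc (0 : ℝ) 1, g p ≤ 19/20) ∧
      g (1/2) = 19/20 := by
  have hD : ∀ p ∈ Set.Icc (0 : ℝ) 1, 0 < 12 - 52*p + 88*p^2 - 72*p^3 + 36*p^4 := by
    intro p hp
    obtain ⟨h0, h1⟩ := hp
    nlinarith [sq_nonneg p, sq_nonneg (1-p), sq_nonneg (p*(1-p)), mul_nonneg h0 (sub_nonneg.2 h1), sq_nonneg (2*p-1), mul_nonneg (mul_nonneg h0 h0) (sub_nonneg.2 h1)]
  refine ⟨hD, ?_, ?_⟩
  · intro p hp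
    obtain ⟨h0, h1⟩ := hp
    have hDp := hD p ⟨h0, h1⟩
    rw [g, div_le_iff₀ hDp]
    have h01 : 0 ≤ p * (1 - p) := mul_nonneg h0 (by linarith)
    have hQ : (0:ℝ) ≤ 48 - 196*p + 316*p^2 - 160*p^3 - 120*p^4 + 240*p^5 - 80*p^6 := by
      nlinarith [sq_nonneg p, sq_nonneg (1-p), sq_nonneg (p*(1-p)), h01, mul_nonneg h01 h01, mul_nonneg (mul_nonneg h01 h01) h01, sq_nonneg (2*p-1), mul_nonneg (mul_nonneg h0 h0) (sub_nonneg.2 h1)]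
    nlinarith [mul_nonneg (sq_nonneg (2*p-1)) hQ]
  · rw [g]; norm_num
end
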